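/- arXiv:2010.01009 — 5 statements merged into one kernel-verified Lean document; each statement's English description precedes it below -/
import Mathlib

section
/- The function t ↦ t·φ(t), where φ(t) = (1 + t)·ln(1 + 1/t) − 1, is nondecreasing on [1, ∞); consequently φ(t) ≥ (2·ln 2 − 1)/t for all t ≥ 1. -/
open Real Set

/-
The derivative of `t * φ t` is `(2t + 1) log(1 + 1/t) - 2`, and the first term of the series
`log (1 + 1/t) = 2 ∑ (2t + 1)^{-(2k+1)} / (2k + 1)` already gives `(2t + 1) log(1 + 1/t) ≥ 2`.
So `t * φ t` is monotone on `(0, ∞)`, and comparing with its value `2 log 2 - 1` at `t = 1`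
gives the lower bound.
-/

noncomputable def phi (t : ℝ) : ℝ := (1 + t) * log (1 + 1 / t) - 1

lemma phi_one : phi 1 = 2 * log 2 - 1 := by
  norm_num [phi]

lemma two_div_two_mul_add_one_le_log_one_add_inv {t : ℝ} (ht : 0 < t) :
    2 / (2 * t + 1) ≤ log (1 + t⁻¹) := by
  have hsum := hasSum_log_one_add_inv ht
  have hfirst := le_hasSum hsum 0 fun k _ => by positivity
  simpa [div_eq_mul_inv] using hfirst

lemma hasDerivAt_mul_phi {t : ℝ} (ht : 0 < t) :
    HasDerivAt (fun t => t * phi t) ((2 * t + 1) * log (1 + 1 / t) - 2) t := by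
  have hlog : HasDerivAt (fun t => log (1 + 1 / t)) (-(t ^ 2)⁻¹ / (1 + 1 / t)) t := by
    simpa [one_div] using ((hasDerivAt_inv ht.ne').const_add 1).log (by positivity)
  have h : HasDerivAt (fun t => t * phi t)
      (1 * phi t + t * (1 * log (1 + 1 / t) + (1 + t) * (-(t ^ 2)⁻¹ / (1 + 1 / t)))) t :=
    (hasDerivAt_id' t).mul ((((hasDerivAt_id' t).const_add 1).mul hlog).sub_const 1)
  refine h.congr_deriv ?_
  rw [phi]
  field_simp
  ring

lemma monotoneOn_mul_phi : MonotoneOn (fun t => t * phi t) (Ioi 0) := by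
  refine monotoneOn_of_hasDerivWithinAt_nonneg (convex_Ioi 0)
    (fun t ht => (hasDerivAt_mul_phi ht).continuousAt.continuousWithinAt)
    (fun t ht => (hasDerivAt_mul_phi (interior_subset ht)).hasDerivWithinAt) fun t ht => ?_
  have ht : 0 < t := interior_subset ht
  have hlog := two_div_two_mul_add_one_le_log_one_add_inv ht
  rw [div_le_iff₀' (by positivity), ← one_div] at hlog
  linarith

theorem t_mul_phi_monotone_and_lower_bound :
    MonotoneOn (fun t : ℝ => t * ((1 + t) * Real.log (1 + 1 / t) - 1)) (Set.Ici 1) ∧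
    ∀ t : ℝ, 1 ≤ t →
      (1 + t) * Real.log (1 + 1 / t) - 1 ≥ (2 * Real.log 2 - 1) / t := by
  have hmono : MonotoneOn (fun t => t * phi t) (Ici 1) :=
    monotoneOn_mul_phi.mono (Ici_subset_Ioi.2 one_pos)
  refine ⟨hmono, fun t ht => ?_⟩
  have hcompare : 1 * phi 1 ≤ t * phi t := hmono self_mem_Ici ht ht
  rw [one_mul, phi_one] at hcompare
  rw [ge_iff_le, div_le_iff₀ (by positivity)]
  simpa only [phi, mul_comm] using hcompare
end

section
/- For all δ > 0 and ξ > 0, one has (1/δ)·((1 + ξ/δ)·ln(1 + δ/ξ) − 1) ≥ (2·ln 2 − 1)·min{1/δ, 1/ξ}. -/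
/-! Put `t = δ / ξ`; after multiplying by `δ t` the claim is
`(1 + t) log (1 + t) - t ≥ (2 log 2 - 1) · t · min 1 t`, with equality at `t = 1`.
For `t ≥ 1` this is the tangent-line bound `log x ≥ 1 - 1/x` at `x = (1 + t) / 2`.
For `t ≤ 1`, `f t = log (1 + t) - ((2 log 2 - 1) t² + t) / (1 + t)` vanishes at `0` and `1`
and its derivative changes sign only once on `[0, 1]`, from `+` to `-`, so `f ≥ 0` there. -/

open Real Set

lemma min_le_of_monotoneOn_of_antitoneOn {α β : Type*} [LinearOrder α] [LinearOrder β]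
    {f : α → β} {a m b x : α} (hmono : MonotoneOn f (Icc a m)) (hanti : AntitoneOn f (Icc m b))
    (ham : a ≤ m) (hmb : m ≤ b) (hx : x ∈ Icc a b) : min (f a) (f b) ≤ f x := by
  rcases le_total x m with hxm | hmx
  · exact min_le_of_left_le (hmono ⟨le_rfl, ham⟩ ⟨hx.1, hxm⟩ hx.1)
  · exact min_le_of_right_le (hanti ⟨hmx, hx.2⟩ ⟨hmb, le_rfl⟩ hx.2)

lemma hasDerivAt_log_one_add_sub_div (c : ℝ) {x : ℝ} (hx : -1 < x) :
    HasDerivAt (fun t => log (1 + t) - (c * t ^ 2 + t) / (t + 1))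
      (x * (1 - 2 * c - c * x) / (x + 1) ^ 2) x := by
  have hx₁ : x + 1 ≠ 0 := by linarith
  have hlog : HasDerivAt (fun t => log (1 + t)) (1 / (x + 1)) x := by
    simpa [add_comm] using ((hasDerivAt_id' x).const_add 1).log (by linarith)
  have hnum : HasDerivAt (fun t => c * t ^ 2 + t) (c * (2 * x) + 1) x :=
    (((hasDerivAt_pow 2 x).const_mul c).add (hasDerivAt_id' x)).congr_deriv (by ring)
  have hden : HasDerivAt (fun t => t + 1) 1 x := (hasDerivAt_id x).add_const 1
  refine (hlog.sub (hnum.div hden hx₁)).congr_deriv ?_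
  field_simp
  ring

lemma two_log_two_sub_one_mul_sq_add_le {t : ℝ} (ht₀ : 0 ≤ t) (ht₁ : t ≤ 1) :
    (2 * log 2 - 1) * t ^ 2 + t ≤ (1 + t) * log (1 + t) := by
  set c := 2 * log 2 - 1
  set f : ℝ → ℝ := fun t => log (1 + t) - (c * t ^ 2 + t) / (t + 1)
  have hc₀ : 1 / 3 < c := by linarith [log_two_gt_d9]
  have hc₁ : c < 1 / 2 := by linarith [log_two_lt_d9]
  -- the critical point of `f`
  set m := (1 - 2 * c) / c
  have hm₀ : 0 ≤ m := div_nonneg (by linarith) (by linarith)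
  have hm₁ : m ≤ 1 := (div_le_one (by linarith)).2 (by linarith)
  have hcm : c * m = 1 - 2 * c := mul_div_cancel₀ _ (by positivity)
  have hderiv_eq (x : ℝ) :
      x * (1 - 2 * c - c * x) / (x + 1) ^ 2 = c * x * (m - x) / (x + 1) ^ 2 := by
    congr 1
    linear_combination (-x) * hcm
  have hderiv {D : Set ℝ} (hD : D ⊆ Ici 0) (x : ℝ) (hx : x ∈ D) :
      HasDerivWithinAt f (c * x * (m - x) / (x + 1) ^ 2) D x :=
    hderiv_eq x ▸ (hasDerivAt_log_one_add_sub_div c (by linarith [mem_Ici.1 (hD hx)])).hasDerivWithinAt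
  have hcont {a b : ℝ} (ha : 0 ≤ a) : ContinuousOn f (Icc a b) := fun x hx =>
    (hderiv (D := Icc a b) (fun y hy => le_trans ha hy.1) x hx).continuousWithinAt
  have hint {a b : ℝ} (ha : 0 ≤ a) : interior (Icc a b) ⊆ Ici 0 := by
    rw [interior_Icc]
    exact fun y hy => ha.trans hy.1.le
  have hmono : MonotoneOn f (Icc 0 m) :=
    monotoneOn_of_hasDerivWithinAt_nonneg (convex_Icc 0 m) (hcont le_rfl) (hderiv (hint le_rfl))
      (fun x hx => by
        rw [interior_Icc] at hx
        have : 0 ≤ c * x * (m - x) := mul_nonneg (by nlinarith [hx.1]) (by linarith [hx.2])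
        positivity)
  have hanti : AntitoneOn f (Icc m 1) :=
    antitoneOn_of_hasDerivWithinAt_nonpos (convex_Icc m 1) (hcont hm₀) (hderiv (hint hm₀))
      (fun x hx => by
        rw [interior_Icc] at hx
        have : c * x * (m - x) ≤ 0 :=
          mul_nonpos_of_nonneg_of_nonpos (by nlinarith [hx.1]) (by linarith [hx.1])
        exact div_nonpos_of_nonpos_of_nonneg this (by positivity))
  have hf₀ : f 0 = 0 := by simp [f]
  have hf₁ : f 1 = 0 := by
    simp only [f, c]
    norm_num
  have hft := min_le_of_monotoneOn_of_antitoneOn hmono hanti hm₀ hm₁ ⟨ht₀, ht₁⟩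
  rw [hf₀, hf₁, min_self, sub_nonneg, div_le_iff₀ (by linarith)] at hft
  linarith

lemma two_log_two_mul_le {t : ℝ} (ht : 1 ≤ t) : 2 * log 2 * t ≤ (1 + t) * log (1 + t) := by
  have ht₀ : 0 < 1 + t := by linarith
  have htangent := one_sub_inv_le_log_of_pos (half_pos ht₀)
  rw [log_div ht₀.ne' two_ne_zero, inv_div, sub_le_iff_le_add, ← sub_le_iff_le_add',
    le_div_iff₀ ht₀] at htangent
  nlinarith [log_two_lt_d9]

lemma two_log_two_sub_one_mul_min_le {t : ℝ} (ht : 0 < t) :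
    (2 * log 2 - 1) * min 1 t ≤ (1 + t⁻¹) * log (1 + t) - 1 := by
  have hrhs : (1 + t⁻¹) * log (1 + t) - 1 = ((1 + t) * log (1 + t) - t) / t := by
    field_simp
    ring
  rw [hrhs, le_div_iff₀ ht]
  rcases le_total t 1 with ht₁ | ht₁
  · rw [min_eq_right ht₁]
    linarith [two_log_two_sub_one_mul_sq_add_le ht.le ht₁]
  · rw [min_eq_left ht₁]
    linarith [two_log_two_mul_le ht₁]

theorem psi2_opt_lower_bound (δ ξ : ℝ) (hδ : 0 < δ) (hξ : 0 < ξ) :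
    (1 / δ) * ((1 + ξ / δ) * Real.log (1 + δ / ξ) - 1) ≥
      (2 * Real.log 2 - 1) * min (1 / δ) (1 / ξ) := by
  have hmin : min (1 / δ) (1 / ξ) = 1 / δ * min 1 (δ / ξ) := by
    rw [mul_min_of_nonneg _ _ (by positivity)]
    field_simp
  rw [hmin, ← inv_div δ ξ, ge_iff_le, mul_left_comm]
  exact mul_le_mul_of_nonneg_left (two_log_two_sub_one_mul_min_le (by positivity)) (by positivity)
end

section
/- The function t ↦ t·φ₃(t), where φ₃(t) = 1 + t·ln(t/(1 + t)), is nondecreasing on [1, ∞); consequently φ₃(t) ≥ (1 − ln 2)/t for all t ≥ 1. -/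
open Real Set

/-! The derivative of `t * φ₃ t` is `1 + 2 t log (t / (1 + t)) + t / (1 + t)`. With
`y = (1 + t) / t > 1` its nonnegativity reads `log y ≤ (y - y⁻¹) / 2 = sinh (log y)`, which is
`u ≤ sinh u` for `u ≥ 0`. Hence `t * φ₃ t` increases on `(0, ∞)`, and for `t ≥ 1` it is at least
its value `1 - log 2` at `t = 1`. -/

theorem log_le_half_sub_inv {y : ℝ} (hy : 1 ≤ y) : log y ≤ (y - y⁻¹) / 2 := by
  rw [← sinh_log (by linarith)]
  exact self_le_sinh_iff.2 (log_nonneg hy)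

theorem hasDerivAt_mul_one_add_mul_log_div {t : ℝ} (ht : 0 < t) :
    HasDerivAt (fun s : ℝ => s * (1 + s * log (s / (1 + s))))
      (1 + 2 * t * log (t / (1 + t)) + t / (1 + t)) t := by
  have ht1 : 1 + t ≠ 0 := by positivity
  have hquot : HasDerivAt (fun s : ℝ => s / (1 + s)) (1 / (1 + t) ^ 2) t := by
    refine ((hasDerivAt_id' t).fun_div ((hasDerivAt_id' t).const_add 1) ht1).congr_deriv ?_
    ring
  have hlog := hquot.log (div_ne_zero ht.ne' ht1)
  have hinner := ((hasDerivAt_id' t).fun_mul hlog).const_add 1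
  refine ((hasDerivAt_id' t).fun_mul hinner).congr_deriv ?_
  field_simp
  ring

theorem one_add_two_mul_mul_log_div_add_div_nonneg {t : ℝ} (ht : 0 < t) :
    0 ≤ 1 + 2 * t * log (t / (1 + t)) + t / (1 + t) := by
  have hlog : log (t / (1 + t)) = -log ((1 + t) / t) := by
    rw [← log_inv, inv_div]
  have hbound := log_le_half_sub_inv (y := (1 + t) / t) (by rw [le_div_iff₀ ht]; linarith)
  have hscaled := mul_le_mul_of_nonneg_left hbound (by positivity : 0 ≤ 2 * t)
  have hhalf : 2 * t * (((1 + t) / t - ((1 + t) / t)⁻¹) / 2) = 1 + t / (1 + t) := by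
    field_simp
    ring
  rw [hlog]
  linarith

theorem monotoneOn_mul_one_add_mul_log_div :
    MonotoneOn (fun t : ℝ => t * (1 + t * log (t / (1 + t)))) (Ioi 0) := by
  refine monotoneOn_of_hasDerivWithinAt_nonneg (convex_Ioi 0)
    (fun t ht => (hasDerivAt_mul_one_add_mul_log_div ht).continuousAt.continuousWithinAt)
    (fun t ht => (hasDerivAt_mul_one_add_mul_log_div ?_).hasDerivWithinAt)
    (fun t ht => one_add_two_mul_mul_log_div_add_div_nonneg ?_)
  all_goals rwa [interior_Ioi] at ht

theorem t_mul_phi3_monotone_and_lower_bound :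
    MonotoneOn (fun t : ℝ => t * (1 + t * Real.log (t / (1 + t)))) (Set.Ici 1) ∧
    ∀ t : ℝ, 1 ≤ t →
      1 + t * Real.log (t / (1 + t)) ≥ (1 - Real.log 2) / t := by
  have hmono : MonotoneOn (fun t : ℝ => t * (1 + t * log (t / (1 + t)))) (Ici 1) :=
    monotoneOn_mul_one_add_mul_log_div.mono (Ici_subset_Ioi.2 one_pos)
  refine ⟨hmono, fun t ht => ?_⟩
  have hle : 1 - log 2 ≤ t * (1 + t * log (t / (1 + t))) :=
    calc 1 - log 2 = 1 * (1 + 1 * log (1 / (1 + 1))) := by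
          rw [one_add_one_eq_two, one_div, log_inv]; ring
      _ ≤ t * (1 + t * log (t / (1 + t))) := hmono self_mem_Ici ht ht
  rw [ge_iff_le, div_le_iff₀ (by linarith)]
  linarith
end

section
/- For all δ > 0 and ξ > 0, one has 1/δ + (ξ/δ²)·ln(ξ/(δ + ξ)) ≥ (1 − ln 2)·min{1/δ, 1/ξ}. -/
open Real Finset

-- exp upper bound: exp y ≤ 1 + y + y^2/2 + 2/9 y^3 for 0 ≤ y ≤ 1
lemma exp_ub (y : ℝ) (h0 : 0 ≤ y) (h1 : y ≤ 1) :
    Real.exp y ≤ 1 + y + y^2/2 + (2/9) * y^3 := by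
  have h := Real.exp_bound' h0 h1 (n := 3) (by norm_num)
  norm_num [Finset.sum_range_succ, Nat.factorial] at h
  nlinarith [pow_nonneg h0 3]

-- exp lower bound: exp p ≥ 1 + p + p^2/2 + p^3/6 - 5/96 p^4 for 0 ≤ p ≤ 1
lemma exp_lb (p : ℝ) (h0 : 0 ≤ p) (h1 : p ≤ 1) :
    1 + p + p^2/2 + p^3/6 - (5/96) * p^4 ≤ Real.exp p := by
  have hb := Real.exp_bound (x := p) (by rw [abs_of_nonneg h0]; exact h1) (n := 4) (by norm_num)
  rw [abs_of_nonneg h0, abs_sub_le_iff] at hb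
  have h2 := hb.2
  norm_num [Finset.sum_range_succ, Nat.factorial] at h2
  nlinarith [h2]

-- Bernoulli-type: log (1+s) ≤ s * log 2 for s ≥ 1
lemma bern_log (s : ℝ) (hs : 1 ≤ s) : Real.log (1 + s) ≤ s * Real.log 2 := by
  have hb : 1 + s * 1 ≤ (1 + 1) ^ s := one_add_mul_self_le_rpow_one_add (by norm_num) hs
  have h2 : Real.log ((1 + (1:ℝ)) ^ s) = s * Real.log 2 := by
    rw [Real.log_rpow (by norm_num)]; norm_num
  calc Real.log (1 + s) ≤ Real.log ((1 + (1:ℝ)) ^ s) :=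
        Real.log_le_log (by linarith) (by linarith [hb])
    _ = s * Real.log 2 := h2

-- Padé lower: log x ≥ 2(x-1)/(x+1) for 1 ≤ x ≤ 2
lemma log_lb (x : ℝ) (h1 : 1 ≤ x) (h2 : x ≤ 2) : 2*(x-1)/(x+1) ≤ Real.log x := by
  set y := 2*(x-1)/(x+1) with hy
  have hx1 : (0:ℝ) < x + 1 := by linarith
  have hy0 : 0 ≤ y := div_nonneg (by linarith) (by linarith)
  have hy1 : y ≤ 1 := by rw [hy, div_le_one hx1]; linarith
  have hyx : y * (x+1) = 2*(x-1) := by rw [hy]; field_simp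
  have hexp : Real.exp y ≤ x := by
    have := exp_ub y hy0 hy1
    nlinarith [pow_nonneg hy0 3, sq_nonneg y, sq_nonneg (y - 1), mul_pos hx1 hx1]
  calc y = Real.log (Real.exp y) := (Real.log_exp y).symm
    _ ≤ Real.log x := Real.log_le_log (Real.exp_pos y) hexp

-- Padé upper: log (1+u) ≤ (u^2+2u)/(2(1+u)) for 0 ≤ u ≤ 1
lemma log_ub (u : ℝ) (h0 : 0 ≤ u) (h1 : u ≤ 1) :
    Real.log (1 + u) ≤ (u^2 + 2*u)/(2*(1+u)) := by
  set p := (u^2 + 2*u)/(2*(1+u)) with hp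
  have hu1 : (0:ℝ) < 1 + u := by linarith
  have hp0 : 0 ≤ p := by positivity
  have hpu : p * (2*(1+u)) = u^2 + 2*u := by rw [hp]; field_simp
  have hpleu : p ≤ u := by
    rw [hp, div_le_iff₀ (by linarith)]
    nlinarith
  have hp1 : p ≤ 1 := hpleu.trans h1
  have hexp : 1 + u ≤ Real.exp p := by
    have hlb := exp_lb p hp0 hp1
    have key : 1 + u ≤ 1 + p + p^2/2 + p^3/6 - (5/96) * p^4 := by
      have h2 : (p - u) * (2*(1+u)) = -u^2 := by nlinarith
      nlinarith [sq_nonneg (1+u), pow_nonneg hp0 3, mul_pos hu1 hu1,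
        mul_nonneg (pow_nonneg hp0 3) (sub_nonneg.2 hp1), sq_nonneg (u*u - p*(1+u))]
    linarith [hlb]
  calc Real.log (1 + u) ≤ Real.log (Real.exp p) := Real.log_le_log hu1 hexp
    _ = p := Real.log_exp p

lemma key_ineq (t : ℝ) (ht : 0 < t) :
    (1 - Real.log 2) * min 1 (1/t) ≤ 1 + t * Real.log (t / (1 + t)) := by
  have h1t : (0:ℝ) < 1 + t := by linarith
  have h1it : (0:ℝ) < 1 + 1/t := by positivity
  have hlog : Real.log (t / (1 + t)) = - Real.log (1 + 1/t) := by
    have e1 : 1 + 1/t = (1+t)/t := by field_simp; ring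
    rw [e1, ← Real.log_inv, inv_div]
  have hL1 := Real.log_two_gt_d9
  have hL2 := Real.log_two_lt_d9
  rw [hlog]
  rcases le_total t 1 with hle | hge
  · -- case t ≤ 1 : min = 1
    have hmin : min 1 (1/t) = 1 := min_eq_left (by rw [le_div_iff₀ ht]; linarith)
    rw [hmin, mul_one]
    have hs : 1 ≤ 1/t := by rw [le_div_iff₀ ht]; linarith
    have hb := bern_log (1/t) hs
    have : t * Real.log (1 + 1/t) ≤ Real.log 2 := by
      have := mul_le_mul_of_nonneg_left hb ht.le
      calc t * Real.log (1 + 1/t) ≤ t * (1/t * Real.log 2) := this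
        _ = Real.log 2 := by field_simp
    linarith
  · -- case t ≥ 1 : min = 1/t
    have hmin : min 1 (1/t) = 1/t := min_eq_right (by rw [div_le_one ht]; linarith)
    rw [hmin]
    have hsuff : 1 - Real.log 2 ≤ t - t^2 * Real.log (1 + 1/t) →
        (1 - Real.log 2) * (1/t) ≤ 1 + t * (- Real.log (1 + 1/t)) := by
      intro h
      rw [← sub_nonneg]
      have heq : 1 + t * (- Real.log (1 + 1/t)) - (1 - Real.log 2) * (1/t)
          = (t - t^2 * Real.log (1 + 1/t) - (1 - Real.log 2)) / t := by
        field_simp; ring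
      rw [heq]
      exact div_nonneg (by linarith) ht.le
    apply hsuff
    rcases le_total t (5/3) with hcase | hcase
    · -- 1 ≤ t ≤ 5/3 : Padé lower bound on log(2t/(t+1))
      have hx0 : (0:ℝ) < 2*t/(t+1) := by positivity
      have hxsplit : Real.log (1 + 1/t) = Real.log 2 - Real.log (2*t/(t+1)) := by
        have hprod : (1 + 1/t) * (2*t/(t+1)) = 2 := by field_simp
        have hm := Real.log_mul (ne_of_gt h1it) (ne_of_gt hx0)
        rw [hprod] at hm
        linarith
      have hx1 : 1 ≤ 2*t/(t+1) := by rw [le_div_iff₀ (by linarith)]; linarith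
      have hx2 : 2*t/(t+1) ≤ 2 := by rw [div_le_iff₀ (by linarith)]; linarith
      have hlb := log_lb (2*t/(t+1)) hx1 hx2
      have hne : (t:ℝ) + 1 ≠ 0 := by linarith
      have hne3 : (3:ℝ)*t + 1 ≠ 0 := by linarith
      have hval : 2*(2*t/(t+1) - 1)/(2*t/(t+1) + 1) = 2*(t-1)/(3*t+1) := by
        rw [div_eq_div_iff (by positivity) (by positivity)]
        field_simp
        ring
      rw [hval] at hlb
      rw [hxsplit]
      have ht2 : (0:ℝ) ≤ t^2 := sq_nonneg t
      have step : t - t^2 * Real.log 2 + t^2 * (2*(t-1)/(3*t+1)) ≤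
          t - t^2 * (Real.log 2 - Real.log (2*t/(t+1))) := by
        have := mul_le_mul_of_nonneg_left hlb ht2
        nlinarith
      refine le_trans ?_ step
      rw [← sub_nonneg]
      have h3t : (0:ℝ) < 3*t+1 := by linarith
      have heq : t - t^2 * Real.log 2 + t^2 * (2*(t-1)/(3*t+1)) - (1 - Real.log 2)
          = (t-1) * ((2 - 3*Real.log 2)*t^2 + (3 - 4*Real.log 2)*t + (1 - Real.log 2)) / (3*t+1) := by
        field_simp
        ring
      rw [heq]
      apply div_nonneg _ h3t.le
      apply mul_nonneg (by linarith)
      nlinarith [mul_nonneg (sub_nonneg.2 hge) (sub_nonneg.2 hcase), sq_nonneg (t-1)]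
    · -- t ≥ 5/3 : Padé upper bound on log(1+1/t)
      have hu0 : (0:ℝ) ≤ 1/t := by positivity
      have hu1 : 1/t ≤ 1 := by rw [div_le_one ht]; linarith
      have hub := log_ub (1/t) hu0 hu1
      have ht2 : (0:ℝ) ≤ t^2 := sq_nonneg t
      have hval : ((1/t)^2 + 2*(1/t))/(2*(1+1/t)) = (1 + 2*t)/(2*t*(t+1)) := by
        rw [div_eq_div_iff (by positivity) (by positivity)]
        field_simp
      rw [hval] at hub
      have step : t^2 * Real.log (1 + 1/t) ≤ t*(1+2*t)/(2*(t+1)) := by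
        have h := mul_le_mul_of_nonneg_left hub ht2
        calc t^2 * Real.log (1 + 1/t) ≤ t^2 * ((1 + 2*t)/(2*t*(t+1))) := h
          _ = t*(1+2*t)/(2*(t+1)) := by field_simp
      have hfin : t - t*(1+2*t)/(2*(t+1)) = t/(2*(t+1)) := by
        field_simp
        ring
      have hge516 : 5/16 ≤ t/(2*(t+1)) := by
        rw [le_div_iff₀ (by linarith)]
        linarith
      linarith

theorem psi3_opt_lower_bound (δ ξ : ℝ) (hδ : 0 < δ) (hξ : 0 < ξ) :
    1 / δ + (ξ / δ ^ 2) * Real.log (ξ / (δ + ξ)) ≥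
      (1 - Real.log 2) * min (1 / δ) (1 / ξ) := by
  have ht : 0 < ξ/δ := by positivity
  have hkey := key_ineq (ξ/δ) ht
  have harg : (ξ/δ) / (1 + ξ/δ) = ξ / (δ + ξ) := by
    rw [div_eq_div_iff (by positivity) (by positivity)]
    field_simp
  rw [harg] at hkey
  have hmin : min 1 (1/(ξ/δ)) = δ * min (1/δ) (1/ξ) := by
    rw [one_div_div]
    rcases le_total δ ξ with h | h
    · rw [min_eq_right (by rw [div_le_one hξ]; exact h),
          min_eq_right (one_div_le_one_div_of_le hδ h)]
      field_simp
    · rw [min_eq_left (by rw [le_div_iff₀ hξ]; linarith),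
          min_eq_left (one_div_le_one_div_of_le hξ h)]
      field_simp
  rw [hmin] at hkey
  have hscale := mul_le_mul_of_nonneg_left hkey (le_of_lt (by positivity : (0:ℝ) < 1/δ))
  have hl : 1/δ * ((1 - Real.log 2) * (δ * min (1/δ) (1/ξ))) = (1 - Real.log 2) * min (1/δ) (1/ξ) := by
    field_simp
  have hr : 1/δ * (1 + ξ/δ * Real.log (ξ/(δ+ξ))) = 1/δ + (ξ/δ^2) * Real.log (ξ/(δ+ξ)) := by
    field_simp
  rw [hl, hr] at hscale
  exact hscale
end

section
/- For every ν ∈ (2, 3), the constant γ̃_ν = 1 + ((4 − ν)/(2(3 − ν)))·(1 − 2^{2(3−ν)/(4−ν)}) lies in the open interval (0, 1), and γ̃_ν → 1 − ln 2 as ν → 3 from below. -/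
open Real Set Filter

lemma two_rpow_lt_one_add (t : ℝ) (h0 : 0 < t) (h1 : t < 1) : (2 : ℝ) ^ t < 1 + t := by
  have hne : (0 : ℝ) ≠ Real.log 2 := (Real.log_pos one_lt_two).ne
  have := strictConvexOn_exp.2 (Set.mem_univ (0 : ℝ)) (Set.mem_univ (Real.log 2)) hne
    (by linarith : (0:ℝ) < 1 - t) h0 (by ring)
  rw [Real.rpow_def_of_pos two_pos]
  simp only [smul_eq_mul, mul_zero, zero_add, Real.exp_zero, Real.exp_log two_pos] at this
  calc Real.exp (Real.log 2 * t) = Real.exp (t * Real.log 2) := by ring_nf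
    _ < (1 - t) * 1 + t * 2 := this
    _ = 1 + t := by ring

theorem tilde_gamma_mem_and_limit :
    (∀ ν : ℝ, ν ∈ Set.Ioo (2 : ℝ) 3 →
      1 + ((4 - ν) / (2 * (3 - ν))) * (1 - (2 : ℝ) ^ (2 * (3 - ν) / (4 - ν)))
        ∈ Set.Ioo (0 : ℝ) 1) ∧
    Filter.Tendsto
      (fun ν : ℝ => 1 + ((4 - ν) / (2 * (3 - ν))) * (1 - (2 : ℝ) ^ (2 * (3 - ν) / (4 - ν))))
      (nhdsWithin 3 (Set.Iio 3)) (nhds (1 - Real.log 2)) := by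
  constructor
  · intro ν hν
    obtain ⟨h2, h3⟩ := hν
    set t := 2 * (3 - ν) / (4 - ν) with ht
    have h4 : (0:ℝ) < 4 - ν := by linarith
    have ht0 : 0 < t := div_pos (by linarith) h4
    have ht1 : t < 1 := by
      rw [ht, div_lt_one h4]; linarith
    have h2t : (1:ℝ) < (2:ℝ) ^ t :=
      Real.one_lt_rpow_iff_of_pos two_pos |>.2 (Or.inl ⟨one_lt_two, ht0⟩)
    have hlt : (2:ℝ)^t < 1 + t := two_rpow_lt_one_add t ht0 ht1
    have hinv : (4 - ν) / (2 * (3 - ν)) = 1 / t := by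
      rw [ht]; field_simp
    rw [hinv]
    constructor
    · have : (1/t) * (1 - (2:ℝ)^t) > -1 := by
        rw [gt_iff_lt, show (-1 : ℝ) = (1/t) * (-t) by field_simp]
        apply mul_lt_mul_of_pos_left (by linarith) (by positivity)
      linarith
    · have : (1/t) * (1 - (2:ℝ)^t) < 0 :=
        mul_neg_of_pos_of_neg (by positivity) (by linarith)
      linarith
  · have hderiv : HasDerivAt (fun x : ℝ => Real.exp (Real.log 2 * x)) (Real.log 2) 0 := by
      have := ((hasDerivAt_id (0:ℝ)).const_mul (Real.log 2)).exp
      simpa using this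
    have hslope : Tendsto (slope (fun x : ℝ => Real.exp (Real.log 2 * x)) 0)
        (nhdsWithin 0 {(0:ℝ)}ᶜ) (nhds (Real.log 2)) :=
      hasDerivAt_iff_tendsto_slope.mp hderiv
    have hmem : Set.Ioo (2:ℝ) 3 ∈ nhdsWithin (3:ℝ) (Set.Iio 3) :=
      Ioo_mem_nhdsLT_of_mem (by norm_num : (3:ℝ) ∈ Set.Ioc (2:ℝ) 3)
    have htt : Tendsto (fun ν : ℝ => 2 * (3 - ν) / (4 - ν)) (nhdsWithin (3:ℝ) (Set.Iio 3))
        (nhdsWithin 0 {(0:ℝ)}ᶜ) := by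
      rw [tendsto_nhdsWithin_iff]
      constructor
      · have hc : ContinuousAt (fun ν : ℝ => 2 * (3 - ν) / (4 - ν)) 3 := by
          apply ContinuousAt.div (by fun_prop) (by fun_prop) (by norm_num)
        have := hc.tendsto
        simp only [show (2:ℝ) * (3 - 3) / (4 - 3) = 0 by norm_num] at this
        exact this.mono_left nhdsWithin_le_nhds
      · filter_upwards [hmem] with ν hν
        have : 0 < 2 * (3 - ν) / (4 - ν) := div_pos (by linarith [hν.2]) (by linarith [hν.2])
        exact this.ne'
    have hmain : Tendsto
        (fun ν : ℝ => 1 - slope (fun x : ℝ => Real.exp (Real.log 2 * x)) 0 (2 * (3 - ν) / (4 - ν)))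
        (nhdsWithin (3:ℝ) (Set.Iio 3)) (nhds (1 - Real.log 2)) :=
      tendsto_const_nhds.sub (hslope.comp htt)
    apply hmain.congr'
    filter_upwards [hmem] with ν hν
    obtain ⟨h2, h3⟩ := hν
    have h3ν : (0:ℝ) < 3 - ν := by linarith
    have h4 : (0:ℝ) < 4 - ν := by linarith
    have ht0 : 0 < 2 * (3 - ν) / (4 - ν) := div_pos (by linarith) h4
    rw [slope_def_field]
    simp only [mul_zero, Real.exp_zero, sub_zero, div_sub_div_same]
    rw [Real.rpow_def_of_pos two_pos]
    field_simp
    ring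
end
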